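/- If (A, ·, ε) is an associative color algebra and α : A → A an averaging operator, then the operations x⊣y := x·α(y) and x⊢y := α(x)·y make A into an associative color dialgebra; consequently the bracket [x,y] := x·α(y) − ε(x,y) α(y)·x makes A a Leibniz color algebra. -/

import Mathlib

/-!
Each dialgebra axiom for `x ⊣ y = x·α(y)` and `x ⊢ y = α(x)·y` is associativity of `·`
once one averaging identity has moved `α` to the right place; evenness of `α` keeps the
factors homogeneous. The Leibniz identity for `[x,y] = x ⊣ y − ε(x,y) y ⊢ x` then holds in
any associative color dialgebra: after expanding both sides, the dialgebra axioms bring the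
products to common normal forms, two terms cancel, and the bicharacter laws of `ε` match the
remaining coefficients.
-/

section ColorDialgebra

variable {K G A : Type*} [CommRing K] [AddCommGroup A] [Module K A]

/-- The axioms of an associative color dialgebra `(A, ⊣, ⊢)` with `l = ⊣` and `r = ⊢`,
imposed on homogeneous elements. -/
structure IsAssocColorDialgebra (𝒜 : G → Submodule K A) (l r : A →ₗ[K] A →ₗ[K] A) : Prop where
  right_left_assoc : ∀ a b c : G, ∀ x ∈ 𝒜 a, ∀ y ∈ 𝒜 b, ∀ z ∈ 𝒜 c,
    l (r x y) z = r x (l y z)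
  left_assoc : ∀ a b c : G, ∀ x ∈ 𝒜 a, ∀ y ∈ 𝒜 b, ∀ z ∈ 𝒜 c,
    l x (l y z) = l (l x y) z
  left_left_eq_left_right : ∀ a b c : G, ∀ x ∈ 𝒜 a, ∀ y ∈ 𝒜 b, ∀ z ∈ 𝒜 c,
    l (l x y) z = l x (r y z)
  right_assoc : ∀ a b c : G, ∀ x ∈ 𝒜 a, ∀ y ∈ 𝒜 b, ∀ z ∈ 𝒜 c,
    r (r x y) z = r x (r y z)
  right_right_eq_left_right : ∀ a b c : G, ∀ x ∈ 𝒜 a, ∀ y ∈ 𝒜 b, ∀ z ∈ 𝒜 c,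
    r x (r y z) = r (l x y) z

structure IsAveragingOperator (𝒜 : G → Submodule K A) (mul : A →ₗ[K] A →ₗ[K] A)
    (α : A →ₗ[K] A) : Prop where
  map_mem : ∀ a : G, ∀ x ∈ 𝒜 a, α x ∈ 𝒜 a
  map_mul_left : ∀ a b : G, ∀ x ∈ 𝒜 a, ∀ y ∈ 𝒜 b, α (mul (α x) y) = mul (α x) (α y)
  mul_eq_map_mul_right : ∀ a b : G, ∀ x ∈ 𝒜 a, ∀ y ∈ 𝒜 b, mul (α x) (α y) = α (mul x (α y))

/-- The color bracket `[u,v] = u ⊣ v − ε(p,q) v ⊢ u` of `u` of degree `p` and `v` of degree `q`. -/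
def colorBracket (ε : G → G → K) (l r : A →ₗ[K] A →ₗ[K] A) (p q : G) (u v : A) : A :=
  l u v - ε p q • r v u

theorem IsAveragingOperator.isAssocColorDialgebra {𝒜 : G → Submodule K A}
    {mul : A →ₗ[K] A →ₗ[K] A} {α : A →ₗ[K] A}
    (hassoc : ∀ a b c : G, ∀ x ∈ 𝒜 a, ∀ y ∈ 𝒜 b, ∀ z ∈ 𝒜 c,
      mul (mul x y) z = mul x (mul y z))
    (hα : IsAveragingOperator 𝒜 mul α) :
    IsAssocColorDialgebra 𝒜 (mul.compl₂ α) (mul ∘ₗ α) where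
  right_left_assoc a b c x hx y hy z hz :=
    hassoc a b c (α x) (hα.map_mem a x hx) y hy (α z) (hα.map_mem c z hz)
  left_assoc a b c x hx y hy z hz := by
    simp only [LinearMap.compl₂_apply]
    rw [← hα.mul_eq_map_mul_right b c y hy z hz,
      hassoc a b c x hx (α y) (hα.map_mem b y hy) (α z) (hα.map_mem c z hz)]
  left_left_eq_left_right a b c x hx y hy z hz := by
    simp only [LinearMap.compl₂_apply, LinearMap.comp_apply]
    rw [hα.map_mul_left b c y hy z hz,
      hassoc a b c x hx (α y) (hα.map_mem b y hy) (α z) (hα.map_mem c z hz)]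
  right_assoc a b c x hx y hy z hz := by
    simp only [LinearMap.comp_apply]
    rw [hα.map_mul_left a b x hx y hy,
      hassoc a b c (α x) (hα.map_mem a x hx) (α y) (hα.map_mem b y hy) z hz]
  right_right_eq_left_right a b c x hx y hy z hz := by
    simp only [LinearMap.compl₂_apply, LinearMap.comp_apply]
    rw [← hα.mul_eq_map_mul_right a b x hx y hy,
      hassoc a b c (α x) (hα.map_mem a x hx) (α y) (hα.map_mem b y hy) z hz]

theorem IsAssocColorDialgebra.colorBracket_leibniz [AddCommGroup G] {𝒜 : G → Submodule K A}
    {l r : A →ₗ[K] A →ₗ[K] A} (hD : IsAssocColorDialgebra 𝒜 l r) {ε : G → G → K}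
    (hε1 : ∀ a b, ε a b * ε b a = 1)
    (hε2 : ∀ a b c, ε a (b + c) = ε a b * ε a c)
    (hε3 : ∀ a b c, ε (a + b) c = ε a c * ε b c)
    {a b c : G} {x y z : A} (hx : x ∈ 𝒜 a) (hy : y ∈ 𝒜 b) (hz : z ∈ 𝒜 c) :
    colorBracket ε l r (a + b) c (colorBracket ε l r a b x y) z =
      colorBracket ε l r a (b + c) x (colorBracket ε l r b c y z) +
        ε b c • colorBracket ε l r (a + c) b (colorBracket ε l r a c x z) y := by
  simp only [colorBracket, map_sub, map_smul, LinearMap.sub_apply, LinearMap.smul_apply,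
    smul_sub, smul_smul]
  rw [hD.right_left_assoc b a c y hy x hx z hz, hD.right_left_assoc c a b z hz x hx y hy,
    hD.left_assoc a b c x hx y hy z hz, ← hD.left_left_eq_left_right a c b x hx z hz y hy,
    ← hD.right_right_eq_left_right b c a y hy z hz x hx,
    hD.right_assoc c b a z hz y hy x hx, hε3 a b c, hε2 a b c, hε3 a c b]
  match_scalars
  all_goals first
    | ring1
    | linear_combination ε a b * hε1 b c
    | linear_combination -(ε a b * ε a c) * hε1 b c

end ColorDialgebra

theorem stmt10_general {K G A : Type*} [Field K] [AddCommGroup G] [AddCommGroup A] [Module K A]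
    (𝒜 : G → Submodule K A) (ε : G → G → K)
    (hε1 : ∀ a b, ε a b * ε b a = 1)
    (hε2 : ∀ a b c, ε a (b + c) = ε a b * ε a c)
    (hε3 : ∀ a b c, ε (a + b) c = ε a c * ε b c)
    (mul : A →ₗ[K] A →ₗ[K] A)
    (hassoc : ∀ a b c : G, ∀ x ∈ 𝒜 a, ∀ y ∈ 𝒜 b, ∀ z ∈ 𝒜 c,
      mul (mul x y) z = mul x (mul y z))
    (α : A →ₗ[K] A)
    (hαeven : ∀ a : G, ∀ x ∈ 𝒜 a, α x ∈ 𝒜 a)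
    (hav1 : ∀ a b : G, ∀ x ∈ 𝒜 a, ∀ y ∈ 𝒜 b, α (mul (α x) y) = mul (α x) (α y))
    (hav2 : ∀ a b : G, ∀ x ∈ 𝒜 a, ∀ y ∈ 𝒜 b, mul (α x) (α y) = α (mul x (α y))) :
    -- with x⊣y := x·α(y) and x⊢y := α(x)·y, A is an associative color dialgebra:
    (∀ a b c : G, ∀ x ∈ 𝒜 a, ∀ y ∈ 𝒜 b, ∀ z ∈ 𝒜 c,
      mul (mul (α x) y) (α z) = mul (α x) (mul y (α z))) ∧
    (∀ a b c : G, ∀ x ∈ 𝒜 a, ∀ y ∈ 𝒜 b, ∀ z ∈ 𝒜 c,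
      mul x (α (mul y (α z))) = mul (mul x (α y)) (α z)) ∧
    (∀ a b c : G, ∀ x ∈ 𝒜 a, ∀ y ∈ 𝒜 b, ∀ z ∈ 𝒜 c,
      mul (mul x (α y)) (α z) = mul x (α (mul (α y) z))) ∧
    (∀ a b c : G, ∀ x ∈ 𝒜 a, ∀ y ∈ 𝒜 b, ∀ z ∈ 𝒜 c,
      mul (α (mul (α x) y)) z = mul (α x) (mul (α y) z)) ∧
    (∀ a b c : G, ∀ x ∈ 𝒜 a, ∀ y ∈ 𝒜 b, ∀ z ∈ 𝒜 c,
      mul (α x) (mul (α y) z) = mul (α (mul x (α y))) z) ∧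
    -- and with [x,y] := x·α(y) − ε(x,y) α(y)·x, A is a Leibniz color algebra:
    (∀ a b c : G, ∀ x ∈ 𝒜 a, ∀ y ∈ 𝒜 b, ∀ z ∈ 𝒜 c,
      (fun (p q : G) (u v : A) => mul u (α v) - ε p q • mul (α v) u) (a + b) c
          ((fun (p q : G) (u v : A) => mul u (α v) - ε p q • mul (α v) u) a b x y) z
        = (fun (p q : G) (u v : A) => mul u (α v) - ε p q • mul (α v) u) a (b + c) x
            ((fun (p q : G) (u v : A) => mul u (α v) - ε p q • mul (α v) u) b c y z)
          + ε b c •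
            (fun (p q : G) (u v : A) => mul u (α v) - ε p q • mul (α v) u) (a + c) b
              ((fun (p q : G) (u v : A) => mul u (α v) - ε p q • mul (α v) u) a c x z) y) := by
  have hD := IsAveragingOperator.isAssocColorDialgebra hassoc ⟨hαeven, hav1, hav2⟩
  exact ⟨hD.right_left_assoc, hD.left_assoc, hD.left_left_eq_left_right, hD.right_assoc,
    hD.right_right_eq_left_right,
    fun _ _ _ _ hx _ hy _ hz ↦ hD.colorBracket_leibniz hε1 hε2 hε3 hx hy hz⟩

/-- An associative color algebra with an averaging operator α gives an
associative color dialgebra via `x⊣y := x·α(y)`, `x⊢y := α(x)·y`; consequently the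
bracket `[x,y] := x·α(y) − ε(x,y) α(y)·x` makes it a Leibniz color algebra. -/
theorem stmt10 {K G A : Type*} [Field K] [AddCommGroup G] [AddCommGroup A] [Module K A]
    (𝒜 : G → Submodule K A) (ε : G → G → K)
    (hε1 : ∀ a b, ε a b * ε b a = 1)
    (hε2 : ∀ a b c, ε a (b + c) = ε a b * ε a c)
    (hε3 : ∀ a b c, ε (a + b) c = ε a c * ε b c)
    (mul : A →ₗ[K] A →ₗ[K] A)
    (hgr : ∀ a b : G, ∀ x ∈ 𝒜 a, ∀ y ∈ 𝒜 b, mul x y ∈ 𝒜 (a + b))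
    (hassoc : ∀ a b c : G, ∀ x ∈ 𝒜 a, ∀ y ∈ 𝒜 b, ∀ z ∈ 𝒜 c,
      mul (mul x y) z = mul x (mul y z))
    (α : A →ₗ[K] A)
    (hαeven : ∀ a : G, ∀ x ∈ 𝒜 a, α x ∈ 𝒜 a)
    (hav1 : ∀ a b : G, ∀ x ∈ 𝒜 a, ∀ y ∈ 𝒜 b, α (mul (α x) y) = mul (α x) (α y))
    (hav2 : ∀ a b : G, ∀ x ∈ 𝒜 a, ∀ y ∈ 𝒜 b, mul (α x) (α y) = α (mul x (α y))) :
    -- with x⊣y := x·α(y) and x⊢y := α(x)·y, A is an associative color dialgebra: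
    (∀ a b c : G, ∀ x ∈ 𝒜 a, ∀ y ∈ 𝒜 b, ∀ z ∈ 𝒜 c,
      mul (mul (α x) y) (α z) = mul (α x) (mul y (α z))) ∧
    (∀ a b c : G, ∀ x ∈ 𝒜 a, ∀ y ∈ 𝒜 b, ∀ z ∈ 𝒜 c,
      mul x (α (mul y (α z))) = mul (mul x (α y)) (α z)) ∧
    (∀ a b c : G, ∀ x ∈ 𝒜 a, ∀ y ∈ 𝒜 b, ∀ z ∈ 𝒜 c,
      mul (mul x (α y)) (α z) = mul x (α (mul (α y) z))) ∧
    (∀ a b c : G, ∀ x ∈ 𝒜 a, ∀ y ∈ 𝒜 b, ∀ z ∈ 𝒜 c,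
      mul (α (mul (α x) y)) z = mul (α x) (mul (α y) z)) ∧
    (∀ a b c : G, ∀ x ∈ 𝒜 a, ∀ y ∈ 𝒜 b, ∀ z ∈ 𝒜 c,
      mul (α x) (mul (α y) z) = mul (α (mul x (α y))) z) ∧
    -- and with [x,y] := x·α(y) − ε(x,y) α(y)·x, A is a Leibniz color algebra:
    (∀ a b c : G, ∀ x ∈ 𝒜 a, ∀ y ∈ 𝒜 b, ∀ z ∈ 𝒜 c,
      (fun (p q : G) (u v : A) => mul u (α v) - ε p q • mul (α v) u) (a + b) c
          ((fun (p q : G) (u v : A) => mul u (α v) - ε p q • mul (α v) u) a b x y) z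
        = (fun (p q : G) (u v : A) => mul u (α v) - ε p q • mul (α v) u) a (b + c) x
            ((fun (p q : G) (u v : A) => mul u (α v) - ε p q • mul (α v) u) b c y z)
          + ε b c •
            (fun (p q : G) (u v : A) => mul u (α v) - ε p q • mul (α v) u) (a + c) b
              ((fun (p q : G) (u v : A) => mul u (α v) - ε p q • mul (α v) u) a c x z) y) :=
  stmt10_general 𝒜 ε hε1 hε2 hε3 mul hassoc α hαeven hav1 hav2
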